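/- Let P = Unif([3]) and Q = Ber(1/2). Then: (1) H_2(P‖Q) = 0, i.e., there exists a joint distribution of (X, Y_1, Y_2) with X uniform on a three-element set, Y_1, Y_2 each Ber(1/2), and X a deterministic function of (Y_1, Y_2); and (2) for every conditionally independent coupling — i.e., every joint distribution of (X, Y_1, Y_2) with X ∼ Unif([3]), Y_1, Y_2 ∼ Ber(1/2), and Y_1, Y_2 conditionally independent given X — one has H(X | Y_1, Y_2) ≥ log 3 − (4/3)·log 2 > 0. -/

import Mathlib

open scoped Classical BigOperators

noncomputable section

/-- `P` is a probability distribution on the finite type `α`. -/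
def IsProbDist {α : Type*} [Fintype α] (P : α → ℝ) : Prop :=
  (∀ x, 0 ≤ P x) ∧ ∑ x, P x = 1

/-- Shannon conditional entropy `H(X | Y)` of a joint pmf `π`
(first coordinate `X`, second coordinate `Y`), with the convention `0 log 0 = 0`. -/
def condEnt {α β : Type*} [Fintype α] [Fintype β] (π : α → β → ℝ) : ℝ :=
  - ∑ y : β, ∑ x : α, π x y * Real.log (π x y / ∑ x' : α, π x' y)

/-- `π` is a joint distribution of `(X, (Y_i)_{i : ι})` with `X ∼ P` and `Y_i ∼ Q i`. -/
def IsCouplingList {α ι : Type*} {β : ι → Type*} [Fintype α] [Fintype ι]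
    [∀ i, Fintype (β i)] (π : α → ((i : ι) → β i) → ℝ)
    (P : α → ℝ) (Q : (i : ι) → β i → ℝ) : Prop :=
  (∀ x y, 0 ≤ π x y) ∧ (∀ x, ∑ y, π x y = P x) ∧
    (∀ i b, (∑ x, ∑ y, if y i = b then π x y else 0) = Q i b)

/-- Minimum list entropy coupling `H(P ‖ Q_1, …, Q_m)`: the infimum of the
conditional entropy `H(X | Y_1, …, Y_m)` over all couplings with `X ∼ P`, `Y_i ∼ Q i`. -/
def Hlist {α ι : Type*} {β : ι → Type*} [Fintype α] [Fintype ι] [∀ i, Fintype (β i)]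
    (P : α → ℝ) (Q : (i : ι) → β i → ℝ) : ℝ :=
  sInf {h | ∃ π : α → ((i : ι) → β i) → ℝ, IsCouplingList π P Q ∧ condEnt π = h}

/-- Homogeneous minimum list entropy coupling `H_m(P ‖ Q)`. -/
def Hm {α β : Type*} [Fintype α] [Fintype β] (m : ℕ) (P : α → ℝ) (Q : β → ℝ) : ℝ :=
  Hlist (β := fun _ : Fin m => β) P (fun _ => Q)

/-- The binary entropy function `h_b`. -/
def binEnt (t : ℝ) : ℝ := -(t * Real.log t + (1 - t) * Real.log (1 - t))

/-- Bernoulli distribution on `Bool` with mass `p` on `true` (i.e. `P(1) = p`). -/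
def Ber (p : ℝ) : Bool → ℝ := fun b => if b then p else 1 - p

/-! ### Auxiliary lemmas -/


lemma myL1 (q : ℝ) (h0 : 0 ≤ q) (h2 : q ≤ 1/2) :
    2 * q * Real.log 2 ≤ Real.negMulLog q + Real.negMulLog (1 - q) := by
  rcases eq_or_lt_of_le h0 with h|hq
  · simp [← h, Real.negMulLog]
  have h1q : (0:ℝ) < 1 - q := by linarith
  have hlog2q : Real.log (2*q) ≤ 2*q - 1 := Real.log_le_sub_one_of_pos (by linarith)
  have hsplit : Real.log (2*q) = Real.log 2 + Real.log q := Real.log_mul (by norm_num) hq.ne'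
  have hL2u : Real.log 2 ≤ 1 := by
    have := Real.log_le_sub_one_of_pos (show (0:ℝ) < 2 by norm_num); linarith
  simp only [Real.negMulLog]
  rcases le_or_gt q (3/10) with hc | hc
  · have hl1q : Real.log (1-q) ≤ -q := by
      have := Real.log_le_sub_one_of_pos h1q; linarith
    nlinarith [mul_le_mul_of_nonneg_left hlog2q hq.le, mul_le_mul_of_nonneg_left hl1q h1q.le,
      mul_le_mul_of_nonneg_left hL2u hq.le, sq_nonneg q]
  · have hL2l : (1/2:ℝ) ≤ Real.log 2 := by
      have h := Real.log_le_sub_one_of_pos (show (0:ℝ) < 1/2 by norm_num)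
      have : Real.log (1/2) = - Real.log 2 := by
        rw [one_div, Real.log_inv]
      linarith
    have hl1q : Real.log (1-q) ≤ 1 - 2*q - Real.log 2 := by
      have h := Real.log_le_sub_one_of_pos (show (0:ℝ) < 2*(1-q) by linarith)
      have hsp : Real.log (2*(1-q)) = Real.log 2 + Real.log (1-q) :=
        Real.log_mul (by norm_num) h1q.ne'
      linarith
    have A : q * Real.log (2*q) ≤ q * (2*q-1) := mul_le_mul_of_nonneg_left hlog2q hq.le
    have B : (1-q) * Real.log (1-q) ≤ (1-q) * (1 - 2*q - Real.log 2) :=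
      mul_le_mul_of_nonneg_left hl1q h1q.le
    nlinarith [mul_nonneg (show (0:ℝ) ≤ 1 - 2*q by linarith)
      (show (0:ℝ) ≤ 2*q - 1 + Real.log 2 by linarith)]

lemma myL_pt (p : ℝ) (h0 : 0 ≤ p) (h1 : p ≤ 1) :
    Real.log 2 - |2*p - 1| * Real.log 2 ≤ Real.negMulLog p + Real.negMulLog (1 - p) := by
  rcases le_or_gt p (1/2) with h | h
  · rw [abs_of_nonpos (by linarith)]
    have := myL1 p h0 h
    nlinarith [this]
  · rw [abs_of_pos (by linarith)]
    have := myL1 (1-p) (by linarith) (by linarith)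
    have e : 1 - (1-p) = p := by ring
    rw [e] at this
    nlinarith [this]

lemma myGibbs4 (t : ℝ) (ht : 0 ≤ t) :
    Real.negMulLog t ≤ 1/4 - t + t * (2 * Real.log 2) := by
  rcases eq_or_lt_of_le ht with h|h
  · simp [← h, Real.negMulLog]
  have h4 : Real.log (4*t) = Real.log 4 + Real.log t := Real.log_mul (by norm_num) h.ne'
  have hlog : Real.log ((4*t)⁻¹) ≤ (4*t)⁻¹ - 1 := Real.log_le_sub_one_of_pos (by positivity)
  rw [Real.log_inv, h4] at hlog
  have h44 : Real.log 4 = 2 * Real.log 2 := by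
    rw [show (4:ℝ) = 2^2 by norm_num, Real.log_pow]; push_cast; ring
  have hinv : t * (4*t)⁻¹ = 1/4 := by field_simp
  have := mul_le_mul_of_nonneg_left hlog h.le
  simp only [Real.negMulLog]
  nlinarith [this]

lemma myAbsSum3 (v0 v1 v2 : ℝ) (h0 : |v0| ≤ 1) (h1 : |v1| ≤ 1) (h2 : |v2| ≤ 1)
    (hs : v0 + v1 + v2 = 0) : |v0| + |v1| + |v2| ≤ 2 := by
  rcases abs_cases v0 with ⟨e0, _⟩|⟨e0, _⟩ <;> rcases abs_cases v1 with ⟨e1, _⟩|⟨e1, _⟩ <;>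
    rcases abs_cases v2 with ⟨e2, _⟩|⟨e2, _⟩ <;>
    rw [e0, e1, e2] <;>
    nlinarith [abs_nonneg v0, neg_abs_le v0, le_abs_self v0, neg_abs_le v1, le_abs_self v1,
      neg_abs_le v2, le_abs_self v2]

lemma mySumPi2 {F : Fintype (Fin 2 → Bool)} (f : (Fin 2 → Bool) → ℝ) :
    @Finset.sum _ ℝ _ (@Finset.univ _ F) f
      = f ![true, true] + f ![true, false] + f ![false, true] + f ![false, false] := by
  rw [Subsingleton.elim F (by infer_instance)]
  rw [← (piFinTwoEquiv fun _ => Bool).symm.sum_comp f, Fintype.sum_prod_type]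
  have h : ∀ a b : Bool, (piFinTwoEquiv fun _ => Bool).symm (a, b) = ![a, b] := by
    intro a b; funext i; fin_cases i <;> rfl
  simp [h, Fintype.sum_bool]
  ring

lemma myHProd (a b : Bool → ℝ) (ha1 : a true + a false = 1) (hb1 : b true + b false = 1) :
    ∑ y : Fin 2 → Bool, Real.negMulLog ((3:ℝ)⁻¹ * (a (y 0) * b (y 1)))
      = 3⁻¹ * Real.log 3 + 3⁻¹ * (Real.negMulLog (a true) + Real.negMulLog (a false))
        + 3⁻¹ * (Real.negMulLog (b true) + Real.negMulLog (b false)) := by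
  rw [mySumPi2]
  have h3 : Real.negMulLog (3:ℝ)⁻¹ = 3⁻¹ * Real.log 3 := by
    simp [Real.negMulLog, Real.log_inv]
  have ea : a false = 1 - a true := by linarith
  have eb : b false = 1 - b true := by linarith
  simp only [Real.negMulLog_mul, Matrix.cons_val_zero, Matrix.cons_val_one, Matrix.head_cons,
    h3, ea, eb]
  ring

lemma myCondEntNonneg {α β : Type*} [Fintype α] {Fb : Fintype β} (π : α → β → ℝ)
    (h : ∀ x y, 0 ≤ π x y) : 0 ≤ @condEnt _ _ _ Fb π := by
  rw [condEnt, neg_nonneg]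
  apply Finset.sum_nonpos
  intro y _
  apply Finset.sum_nonpos
  intro x _
  rcases eq_or_lt_of_le (h x y) with he | hp
  · rw [← he]; simp
  · have hq : π x y ≤ ∑ x', π x' y :=
      Finset.single_le_sum (fun x' _ => h x' y) (Finset.mem_univ x)
    have hqpos : 0 < ∑ x', π x' y := lt_of_lt_of_le hp hq
    have : π x y / ∑ x', π x' y ≤ 1 := (div_le_one hqpos).2 hq
    exact mul_nonpos_of_nonneg_of_nonpos (h x y)
      (Real.log_nonpos (by positivity) this)

lemma myCondEntEq {α β : Type*} [Fintype α] [Fintype β] (π : α → β → ℝ)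
    (h : ∀ x y, 0 ≤ π x y) :
    condEnt π = (∑ y, ∑ x, Real.negMulLog (π x y))
      - ∑ y, Real.negMulLog (∑ x, π x y) := by
  rw [condEnt]
  rw [← Finset.sum_sub_distrib]
  rw [← Finset.sum_neg_distrib]
  apply Finset.sum_congr rfl
  intro y _
  set q := ∑ x', π x' y with hqdef
  have hstep : ∀ x, π x y * Real.log (π x y / q)
      = π x y * Real.log (π x y) - π x y * Real.log q := by
    intro x
    rcases eq_or_lt_of_le (h x y) with he | hp
    · rw [← he]; ring
    · have hq : π x y ≤ q := Finset.single_le_sum (fun x' _ => h x' y) (Finset.mem_univ x)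
      have hqpos : 0 < q := lt_of_lt_of_le hp hq
      rw [Real.log_div hp.ne' hqpos.ne']; ring
  rw [Finset.sum_congr rfl (fun x _ => hstep x), Finset.sum_sub_distrib, ← Finset.sum_mul]
  simp only [Real.negMulLog, ← hqdef, neg_mul, Finset.sum_neg_distrib]
  ring

/-! ### The explicit zero-entropy coupling -/

def f₀ (y : Fin 2 → Bool) : Fin 3 :=
  if y 0 then (if y 1 then 0 else 2) else (if y 1 then 2 else 1)

def w₀ (y : Fin 2 → Bool) : ℝ := if y 0 = y 1 then 1/3 else 1/6

def π₀ (x : Fin 3) (y : Fin 2 → Bool) : ℝ := if f₀ y = x then w₀ y else 0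

lemma w₀_pos (y : Fin 2 → Bool) : 0 < w₀ y := by
  rw [w₀]; split <;> norm_num

lemma π₀_coupling : IsCouplingList (β := fun _ : Fin 2 => Bool) π₀
    (fun _ : Fin 3 => (3 : ℝ)⁻¹) (fun _ : Fin 2 => Ber (1 / 2)) := by
  refine ⟨fun x y => ?_, fun x => ?_, fun i b => ?_⟩
  · rw [π₀]; split
    · exact (w₀_pos y).le
    · exact le_refl _
  · rw [mySumPi2 (fun y => π₀ x y)]
    fin_cases x <;> norm_num [π₀, f₀, w₀, Fin.ext_iff]
  · have key : (∑ y : Fin 2 → Bool, ∑ x : Fin 3, if y i = b then π₀ x y else 0)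
        = Ber (1/2) b := by
      have hx : ∀ y : Fin 2 → Bool, (∑ x, if y i = b then π₀ x y else 0)
          = if y i = b then w₀ y else 0 := by
        intro y
        by_cases h : y i = b
        · simp only [h, if_true, π₀]
          rw [Finset.sum_ite_eq]
          simp
        · simp [h]
      rw [mySumPi2 (fun y => ∑ x, if y i = b then π₀ x y else 0)]
      simp only [hx]
      fin_cases i <;> fin_cases b <;> norm_num [w₀, Ber]
    rw [Finset.sum_comm]
    convert key using 2 <;> first | rfl | congr!

lemma condEnt_π₀ {F : Fintype (Fin 2 → Bool)} : @condEnt _ _ _ F π₀ = 0 := by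
  rw [condEnt, neg_eq_zero]
  apply Finset.sum_eq_zero
  intro y _
  have hcol : (∑ x', π₀ x' y) = w₀ y := by
    simp [π₀, Finset.sum_ite_eq]
  apply Finset.sum_eq_zero
  intro x _
  by_cases h : f₀ y = x
  · rw [π₀, if_pos h, hcol, div_self (w₀_pos y).ne']
    simp
  · rw [π₀, if_neg h]; ring

/-! ### The entropy bound for the uniform-marginal column distribution -/

lemma myEntLe (q : (Fin 2 → Bool) → ℝ) (h0 : ∀ y, 0 ≤ q y)
    (h1 : ∑ y, q y = 1) : ∑ y, Real.negMulLog (q y) ≤ 2 * Real.log 2 := by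
  rw [mySumPi2 (fun y => Real.negMulLog (q y))]
  rw [mySumPi2 q] at h1
  have hmul : (q ![true, true] + q ![true, false] + q ![false, true] + q ![false, false])
      * (2 * Real.log 2) = 2 * Real.log 2 := by rw [h1]; ring
  linarith [myGibbs4 (q ![true, true]) (h0 _), myGibbs4 (q ![true, false]) (h0 _),
    myGibbs4 (q ![false, true]) (h0 _), myGibbs4 (q ![false, false]) (h0 _)]

lemma myS4 (p : Fin 3 → ℝ) (h0 : ∀ x, 0 ≤ p x) (h1 : ∀ x, p x ≤ 1)
    (hs : p 0 + p 1 + p 2 = 3/2) :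
    Real.log 2 ≤ ∑ x : Fin 3, (Real.negMulLog (p x) + Real.negMulLog (1 - p x)) := by
  rw [Fin.sum_univ_three]
  have habs : |2*p 0 - 1| + |2*p 1 - 1| + |2*p 2 - 1| ≤ 2 := by
    apply myAbsSum3 <;>
      first
        | (rw [abs_le]; constructor <;> [linarith [h0 0, h0 1, h0 2]; linarith [h1 0, h1 1, h1 2]])
        | linarith
  have hmul : (|2*p 0 - 1| + |2*p 1 - 1| + |2*p 2 - 1|) * Real.log 2 ≤ 2 * Real.log 2 :=
    mul_le_mul_of_nonneg_right habs (Real.log_nonneg one_le_two)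
  nlinarith [myL_pt (p 0) (h0 0) (h1 0), myL_pt (p 1) (h0 1) (h1 1), myL_pt (p 2) (h0 2) (h1 2)]

lemma myPart2 (K : Fin 2 → Fin 3 → Bool → ℝ)
    (hK : ∀ i x, IsProbDist (K i x))
    (hM : ∀ i b, (∑ x, (3 : ℝ)⁻¹ * K i x b) = Ber (1 / 2) b) :
    Real.log 3 - (4 / 3) * Real.log 2
      ≤ condEnt (fun (x : Fin 3) (y : Fin 2 → Bool) => (3 : ℝ)⁻¹ * ∏ i, K i x (y i)) := by
  have hnnK : ∀ i x b, 0 ≤ K i x b := fun i x b => (hK i x).1 b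
  have hsum_b : ∀ i x, K i x true + K i x false = 1 := by
    intro i x
    have := (hK i x).2
    rwa [Fintype.sum_bool] at this
  set π : Fin 3 → (Fin 2 → Bool) → ℝ :=
    fun x y => (3 : ℝ)⁻¹ * ∏ i, K i x (y i) with hπ
  have hnn : ∀ x y, 0 ≤ π x y := by
    intro x y
    exact mul_nonneg (by norm_num) (Finset.prod_nonneg fun i _ => hnnK i x (y i))
  rw [myCondEntEq π hnn]
  -- the joint-entropy part
  have hx : ∀ x : Fin 3, ∑ y : Fin 2 → Bool, Real.negMulLog (π x y)
      = 3⁻¹ * Real.log 3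
        + 3⁻¹ * (Real.negMulLog (K 0 x true) + Real.negMulLog (K 0 x false))
        + 3⁻¹ * (Real.negMulLog (K 1 x true) + Real.negMulLog (K 1 x false)) := by
    intro x
    have := myHProd (K 0 x) (K 1 x) (hsum_b 0 x) (hsum_b 1 x)
    simp only [hπ, Fin.prod_univ_two]
    exact this
  have hA : (∑ y : Fin 2 → Bool, ∑ x : Fin 3, Real.negMulLog (π x y))
      = Real.log 3
        + 3⁻¹ * (∑ x : Fin 3, (Real.negMulLog (K 0 x true) + Real.negMulLog (K 0 x false)))
        + 3⁻¹ * (∑ x : Fin 3, (Real.negMulLog (K 1 x true) + Real.negMulLog (K 1 x false))) := by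
    rw [Finset.sum_comm, Finset.sum_congr rfl (fun x _ => hx x), Fin.sum_univ_three,
      Fin.sum_univ_three, Fin.sum_univ_three]
    ring
  -- the column-entropy part
  have hrow : ∀ x : Fin 3, ∑ y : Fin 2 → Bool, π x y = 3⁻¹ := by
    intro x
    rw [mySumPi2 (fun y => π x y)]
    simp only [hπ, Fin.prod_univ_two, Matrix.cons_val_zero, Matrix.cons_val_one, Matrix.head_cons]
    linear_combination ((3:ℝ)⁻¹ * (K 1 x true + K 1 x false)) * hsum_b 0 x
      + (3:ℝ)⁻¹ * hsum_b 1 x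
  have hq1 : ∑ y : Fin 2 → Bool, (∑ x : Fin 3, π x y) = 1 := by
    rw [Finset.sum_comm, Finset.sum_congr rfl (fun x _ => hrow x), Fin.sum_univ_three]
    norm_num
  have hB : (∑ y : Fin 2 → Bool, Real.negMulLog (∑ x : Fin 3, π x y)) ≤ 2 * Real.log 2 :=
    myEntLe _ (fun y => Finset.sum_nonneg fun x _ => hnn x y) hq1
  -- the marginal entropy lower bounds
  have hple : ∀ i x, K i x true ≤ 1 := by
    intro i x; have := hnnK i x false; linarith [hsum_b i x]
  have hS : ∀ i : Fin 2, Real.log 2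
      ≤ ∑ x : Fin 3, (Real.negMulLog (K i x true) + Real.negMulLog (K i x false)) := by
    intro i
    have hsum32 : K i 0 true + K i 1 true + K i 2 true = 3/2 := by
      have := hM i true
      rw [Fin.sum_univ_three] at this
      simp only [Ber, if_true] at this
      linarith
    have := myS4 (fun x => K i x true) (fun x => hnnK i x true) (fun x => hple i x) hsum32
    have hrw : ∀ x : Fin 3, Real.negMulLog (K i x true) + Real.negMulLog (1 - K i x true)
        = Real.negMulLog (K i x true) + Real.negMulLog (K i x false) := by
      intro x
      have : K i x false = 1 - K i x true := by linarith [hsum_b i x]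
      rw [this]
    calc Real.log 2 ≤ _ := this
    _ = _ := Finset.sum_congr rfl (fun x _ => hrw x)
  linarith [hS 0, hS 1, hA, hB]

/-! ### Positivity of the gap -/

lemma myGapPos : 0 < Real.log 3 - (4 / 3) * Real.log 2 := by
  have h : Real.log 16 < Real.log 27 := Real.log_lt_log (by norm_num) (by norm_num)
  rw [show (16:ℝ) = 2^4 by norm_num, show (27:ℝ) = 3^3 by norm_num,
    Real.log_pow, Real.log_pow] at h
  push_cast at h
  linarith


/-- for `P = Unif([3])` and `Q = Ber(1/2)`:
(1) `H_2(P‖Q) = 0`, witnessed by a coupling in which `X` is a deterministic function of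
`(Y_1, Y_2)`; and (2) every conditionally independent coupling of `X ∼ Unif([3])` with
`Y_1, Y_2 ∼ Ber(1/2)` satisfies `H(X | Y_1, Y_2) ≥ log 3 − (4/3)·log 2 > 0`. -/
theorem unif3_vs_ber_half :
    (Hm 2 (fun _ : Fin 3 => (3 : ℝ)⁻¹) (Ber (1 / 2)) = 0 ∧
      ∃ (π : Fin 3 → (Fin 2 → Bool) → ℝ) (f : (Fin 2 → Bool) → Fin 3),
        IsCouplingList (β := fun _ : Fin 2 => Bool) π (fun _ : Fin 3 => (3 : ℝ)⁻¹)
            (fun _ : Fin 2 => Ber (1 / 2)) ∧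
          ∀ x y, π x y ≠ 0 → f y = x) ∧
    (∀ K : Fin 2 → Fin 3 → Bool → ℝ,
      (∀ i x, IsProbDist (K i x)) →
      (∀ i b, (∑ x, (3 : ℝ)⁻¹ * K i x b) = Ber (1 / 2) b) →
      Real.log 3 - (4 / 3) * Real.log 2
        ≤ condEnt (fun (x : Fin 3) (y : Fin 2 → Bool) => (3 : ℝ)⁻¹ * ∏ i, K i x (y i))) ∧
    0 < Real.log 3 - (4 / 3) * Real.log 2 := by

  refine ⟨⟨?_, ?_⟩, ?_, myGapPos⟩
  · -- Hm = 0
    rw [Hm, Hlist]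
    apply le_antisymm
    · apply csInf_le
      · refine ⟨0, fun h hh => ?_⟩
        obtain ⟨π, hc, rfl⟩ := hh
        exact myCondEntNonneg π hc.1
      · exact ⟨π₀, π₀_coupling, condEnt_π₀⟩
    · refine le_csInf ⟨0, ⟨π₀, π₀_coupling, condEnt_π₀⟩⟩ ?_
      rintro h ⟨π, hc, rfl⟩
      exact myCondEntNonneg π hc.1
  · exact ⟨π₀, f₀, π₀_coupling, fun x y h => by
      by_contra hne
      exact h (if_neg hne)⟩
  · exact myPart2


end
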